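/- arXiv:1308.1347 — 3 statements merged into one kernel-verified Lean document; each statement's English description precedes it below -/
import Mathlib

section
/- Let f: S¹ → S¹ be a continuous map commuting with the antipodal map a(z) = −z, i.e. f(−z) = −f(z) for all z ∈ S¹ ⊂ ℂ. Then the degree of f is odd. -/
/-!
Let `F` be the lift of `f`. Equivariance says that `F (x + 1/2) - F x - 1/2` is an integer for
every `x`; being continuous on the connected line, it is a constant integer `n`. Adding its values
at `0` and `1/2` gives `d = F 1 - F 0 = 2 n + 1`.
-/

open AddSubgroup

theorem AddCircle.eq_of_continuous_of_coe_eq_zero {X : Type*} [TopologicalSpace X]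
    [PreconnectedSpace X] {p : ℝ} {G : X → ℝ} (hG : Continuous G)
    (hG0 : ∀ x, (G x : AddCircle p) = 0) (x y : X) : G x = G y :=
  isPreconnected_univ.constant_of_mapsTo (T := (zmultiples p : Set ℝ))
    (isDiscrete_iff_discreteTopology.mpr (inferInstanceAs (DiscreteTopology (zmultiples p))))
    hG.continuousOn
    (fun z _ => (QuotientAddGroup.eq_zero_iff _).mp (hG0 z)) trivial trivial

theorem AddCircle.coe_lift_add_sub_eq_zero {p c : ℝ} {f : AddCircle p → AddCircle p}
    {F : ℝ → ℝ} (hlift : ∀ x : ℝ, f x = F x) (hc : ∀ q, f (q + c) = f q + c) (x : ℝ) :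
    ((F (x + c) - F x - c : ℝ) : AddCircle p) = 0 := by
  rw [coe_sub, coe_sub, ← hlift, coe_add, hc, hlift, sub_sub, ← coe_add, sub_self]

/-- A continuous self-map `f` of the circle `ℝ/ℤ` commuting with the antipodal
map (translation by `1/2`) has odd degree.  Here `F : ℝ → ℝ` is a continuous lift of `f`
through the universal cover, and `d` is the degree of `f`, i.e. `F (x + 1) = F x + d`. -/
theorem degree_odd_of_antipodal_equivariant
    (f : C(AddCircle (1 : ℝ), AddCircle (1 : ℝ))) (F : ℝ → ℝ) (hF : Continuous F)
    (hlift : ∀ x : ℝ, f (x : AddCircle (1 : ℝ)) = ((F x : ℝ) : AddCircle (1 : ℝ)))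
    (d : ℤ) (hdeg : ∀ x : ℝ, F (x + 1) = F x + d)
    (hanti : ∀ p : AddCircle (1 : ℝ),
      f (p + (((1 : ℝ) / 2 : ℝ) : AddCircle (1 : ℝ)))
        = f p + (((1 : ℝ) / 2 : ℝ) : AddCircle (1 : ℝ))) :
    Odd d := by
  set G : ℝ → ℝ := fun x => F (x + 1 / 2) - F x - 1 / 2
  have hG0 : ∀ x, (G x : AddCircle (1 : ℝ)) = 0 :=
    AddCircle.coe_lift_add_sub_eq_zero hlift hanti
  have hconst : G 0 = G (1 / 2) :=
    AddCircle.eq_of_continuous_of_coe_eq_zero (by fun_prop) hG0 0 (1 / 2)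
  obtain ⟨n, hn⟩ := (AddCircle.coe_eq_zero_iff _).mp (hG0 0)
  refine ⟨n, ?_⟩
  have h1 := hdeg 0
  norm_num [G, zsmul_eq_mul] at hconst hn h1
  exact_mod_cast (by linarith : (d : ℝ) = 2 * n + 1)
end

section
/- Given a short exact sequence of Fredholm operators between Banach spaces, i.e. a commuting diagram with exact rows 0 → X′ → X → X″ → 0 and 0 → Y′ → Y → Y″ → 0 and Fredholm operators D′: X′ → Y′, D: X → Y, D″: X″ → Y″, there is an exact sequence 0 → ker D′ → ker D → ker D″ → coker D′ → coker D → coker D″ → 0; in particular ind(D) = ind(D′) + ind(D″). -/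
/-!
The rows of the diagram and the vertical maps `D', D, D''` satisfy the hypotheses of the snake
lemma, which gives the six-term exact sequence of kernels and cokernels with the connecting
map `δ`. An exact sequence of finite-dimensional spaces that starts and ends with `0` has
vanishing alternating sum of dimensions, and for the snake sequence this alternating sum is
`ind D' - ind D + ind D''`.
-/

open Function LinearMap Submodule

namespace LinearMap

variable {R : Type*} [Ring R] {M M' N N' : Type*} [AddCommGroup M] [Module R M]
  [AddCommGroup M'] [Module R M'] [AddCommGroup N] [Module R N] [AddCommGroup N'] [Module R N']
  {f : M →ₗ[R] M'} {g : N →ₗ[R] N'} {i : M →ₗ[R] N} {i' : M' →ₗ[R] N'}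

theorem map_mem_ker_of_comp_eq (h : g ∘ₗ i = i' ∘ₗ f) : ∀ x ∈ ker i, f x ∈ ker i' := by
  intro x hx
  rw [mem_ker, ← comp_apply, ← h, comp_apply, mem_ker.mp hx, map_zero]

theorem range_le_comap_range_of_comp_eq (h : g ∘ₗ i = i' ∘ₗ f) :
    range i ≤ (range i').comap g := by
  rintro _ ⟨x, rfl⟩
  exact ⟨f x, congr($h x).symm⟩

theorem restrict_ker_injective (hf : Injective f) (h : g ∘ₗ i = i' ∘ₗ f) :
    Injective (f.restrict (map_mem_ker_of_comp_eq h)) :=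
  fun _ _ hxy => Subtype.ext (hf congr(($hxy : M')))

end LinearMap

theorem Submodule.mapQ_surjective_of_surjective {R M N : Type*} [Ring R] [AddCommGroup M]
    [Module R M] [AddCommGroup N] [Module R N] {p : Submodule R M} {q : Submodule R N}
    {g : M →ₗ[R] N} (hg : Surjective g) (h : p ≤ q.comap g) : Surjective (p.mapQ q g h) := by
  intro y
  obtain ⟨n, rfl⟩ := Quotient.mk_surjective _ y
  obtain ⟨m, rfl⟩ := hg n
  exact ⟨Quotient.mk m, rfl⟩

section Snake

variable {R : Type*} [CommRing R] {M₁ M₂ M₃ N₁ N₂ N₃ : Type*}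
  [AddCommGroup M₁] [Module R M₁] [AddCommGroup M₂] [Module R M₂] [AddCommGroup M₃] [Module R M₃]
  [AddCommGroup N₁] [Module R N₁] [AddCommGroup N₂] [Module R N₂] [AddCommGroup N₃] [Module R N₃]
  {i₁ : M₁ →ₗ[R] N₁} {i₂ : M₂ →ₗ[R] N₂} {i₃ : M₃ →ₗ[R] N₃}
  {f₁ : M₁ →ₗ[R] M₂} {f₂ : M₂ →ₗ[R] M₃} {g₁ : N₁ →ₗ[R] N₂} {g₂ : N₂ →ₗ[R] N₃}

theorem exact_restrict_ker (hf : Exact f₁ f₂) (hg₁ : Injective g₁)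
    (h₁ : g₁ ∘ₗ i₁ = i₂ ∘ₗ f₁) (h₂ : g₂ ∘ₗ i₂ = i₃ ∘ₗ f₂) :
    Exact (f₁.restrict (map_mem_ker_of_comp_eq h₁)) (f₂.restrict (map_mem_ker_of_comp_eq h₂)) := by
  rintro ⟨x, hx⟩
  constructor
  · intro hfx
    obtain ⟨y, rfl⟩ := (hf x).mp congr(($hfx : M₃))
    have hy : g₁ (i₁ y) = g₁ 0 := by
      rw [map_zero, ← LinearMap.comp_apply, h₁, LinearMap.comp_apply, mem_ker.mp hx]
    exact ⟨⟨y, hg₁ hy⟩, rfl⟩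
  · rintro ⟨⟨y, _⟩, hy⟩
    exact Subtype.ext (by rw [← hy]; exact hf.apply_apply_eq_zero y)

theorem exact_mapQ_range (hg : Exact g₁ g₂) (hf₂ : Surjective f₂)
    (h₁ : g₁ ∘ₗ i₁ = i₂ ∘ₗ f₁) (h₂ : g₂ ∘ₗ i₂ = i₃ ∘ₗ f₂) :
    Exact (mapQ _ _ g₁ (range_le_comap_range_of_comp_eq h₁))
      (mapQ _ _ g₂ (range_le_comap_range_of_comp_eq h₂)) := by
  refine (hg.exact_mapQ_iff _ _).mpr fun y ⟨_, x, hx⟩ => ?_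
  obtain ⟨m, rfl⟩ := hf₂ x
  exact ⟨i₂ m, ⟨m, rfl⟩, congr($h₂ m).trans hx⟩

theorem exists_snake_exact_sequence (hf : Exact f₁ f₂) (hf₁ : Injective f₁) (hf₂ : Surjective f₂)
    (hg : Exact g₁ g₂) (hg₁ : Injective g₁) (hg₂ : Surjective g₂)
    (h₁ : g₁ ∘ₗ i₁ = i₂ ∘ₗ f₁) (h₂ : g₂ ∘ₗ i₂ = i₃ ∘ₗ f₂) :
    ∃ (α : ker i₁ →ₗ[R] ker i₂) (β : ker i₂ →ₗ[R] ker i₃) (δ : ker i₃ →ₗ[R] N₁ ⧸ range i₁)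
      (ε : (N₁ ⧸ range i₁) →ₗ[R] N₂ ⧸ range i₂) (ζ : (N₂ ⧸ range i₂) →ₗ[R] N₃ ⧸ range i₃),
      (∀ x, (α x : M₂) = f₁ x) ∧ (∀ x, (β x : M₃) = f₂ x) ∧
      (∀ y, ε (Submodule.Quotient.mk y) = Submodule.Quotient.mk (g₁ y)) ∧
      (∀ y, ζ (Submodule.Quotient.mk y) = Submodule.Quotient.mk (g₂ y)) ∧
      Injective α ∧ Exact α β ∧ Exact β δ ∧ Exact δ ε ∧ Exact ε ζ ∧ Surjective ζ :=
  ⟨_, _, SnakeLemma.δ' i₁ i₂ i₃ f₁ f₂ hf g₁ g₂ hg h₁ h₂ (ker i₃).subtype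
      (exact_subtype_ker_map i₃) (range i₁).mkQ (exact_map_mkQ_range i₁) hf₂ hg₁, _, _,
    fun _ => rfl, fun _ => rfl, fun _ => rfl, fun _ => rfl,
    restrict_ker_injective hf₁ h₁, exact_restrict_ker hf hg₁ h₁ h₂,
    SnakeLemma.exact_δ'_right _ _ _ _ _ _ _ _ _ _ _ _ (exact_subtype_ker_map i₂) _ _ _ _ _ _ _
      rfl (ker i₃).injective_subtype,
    SnakeLemma.exact_δ'_left _ _ _ _ _ _ _ _ _ _ _ _ _ _ _ _ (exact_map_mkQ_range i₂) _ _ _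
      rfl (range i₁).mkQ_surjective,
    exact_mapQ_range hg hf₂ h₁ h₂, mapQ_surjective_of_surjective hg₂ _⟩

end Snake

theorem fredholm_snake_exact_sequence_general
    {𝕜 : Type} [NontriviallyNormedField 𝕜]
    {X' X X'' Y' Y Y'' : Type}
    [NormedAddCommGroup X'] [NormedSpace 𝕜 X']
    [NormedAddCommGroup X] [NormedSpace 𝕜 X]
    [NormedAddCommGroup X''] [NormedSpace 𝕜 X'']
    [NormedAddCommGroup Y'] [NormedSpace 𝕜 Y']
    [NormedAddCommGroup Y] [NormedSpace 𝕜 Y]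
    [NormedAddCommGroup Y''] [NormedSpace 𝕜 Y'']
    (i : X' →L[𝕜] X) (p : X →L[𝕜] X'') (j : Y' →L[𝕜] Y) (q : Y →L[𝕜] Y'')
    (D' : X' →L[𝕜] Y') (D : X →L[𝕜] Y) (D'' : X'' →L[𝕜] Y'')
    (hi : Function.Injective i) (hip : Function.Exact i p) (hp : Function.Surjective p)
    (hj : Function.Injective j) (hjq : Function.Exact j q) (hq : Function.Surjective q)
    (hcomm₁ : D.comp i = j.comp D') (hcomm₂ : D''.comp p = q.comp D)
    [FiniteDimensional 𝕜 (LinearMap.ker (D' : X' →ₗ[𝕜] Y'))] [FiniteDimensional 𝕜 (LinearMap.ker (D : X →ₗ[𝕜] Y))]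
    [FiniteDimensional 𝕜 (LinearMap.ker (D'' : X'' →ₗ[𝕜] Y''))]
    [FiniteDimensional 𝕜 (Y' ⧸ LinearMap.range (D' : X' →ₗ[𝕜] Y'))]
    [FiniteDimensional 𝕜 (Y ⧸ LinearMap.range (D : X →ₗ[𝕜] Y))]
    [FiniteDimensional 𝕜 (Y'' ⧸ LinearMap.range (D'' : X'' →ₗ[𝕜] Y''))] :
    (∃ (α : LinearMap.ker (D' : X' →ₗ[𝕜] Y') →ₗ[𝕜] LinearMap.ker (D : X →ₗ[𝕜] Y))
        (β : LinearMap.ker (D : X →ₗ[𝕜] Y) →ₗ[𝕜] LinearMap.ker (D'' : X'' →ₗ[𝕜] Y''))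
        (δ : LinearMap.ker (D'' : X'' →ₗ[𝕜] Y'') →ₗ[𝕜] Y' ⧸ LinearMap.range (D' : X' →ₗ[𝕜] Y'))
        (ε : (Y' ⧸ LinearMap.range (D' : X' →ₗ[𝕜] Y')) →ₗ[𝕜] Y ⧸ LinearMap.range (D : X →ₗ[𝕜] Y))
        (ζ : (Y ⧸ LinearMap.range (D : X →ₗ[𝕜] Y)) →ₗ[𝕜] Y'' ⧸ LinearMap.range (D'' : X'' →ₗ[𝕜] Y'')),
      (∀ x : LinearMap.ker (D' : X' →ₗ[𝕜] Y'), (α x : X) = i (x : X')) ∧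
      (∀ x : LinearMap.ker (D : X →ₗ[𝕜] Y), (β x : X'') = p (x : X)) ∧
      (∀ y : Y', ε (Submodule.Quotient.mk y) = Submodule.Quotient.mk (j y)) ∧
      (∀ y : Y, ζ (Submodule.Quotient.mk y) = Submodule.Quotient.mk (q y)) ∧
      Function.Injective α ∧ Function.Exact α β ∧ Function.Exact β δ ∧
      Function.Exact δ ε ∧ Function.Exact ε ζ ∧ Function.Surjective ζ) ∧
    ((Module.finrank 𝕜 (LinearMap.ker (D : X →ₗ[𝕜] Y)) : ℤ)
        - (Module.finrank 𝕜 (Y ⧸ LinearMap.range (D : X →ₗ[𝕜] Y)) : ℤ)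
      = ((Module.finrank 𝕜 (LinearMap.ker (D' : X' →ₗ[𝕜] Y')) : ℤ)
          - (Module.finrank 𝕜 (Y' ⧸ LinearMap.range (D' : X' →ₗ[𝕜] Y')) : ℤ))
        + ((Module.finrank 𝕜 (LinearMap.ker (D'' : X'' →ₗ[𝕜] Y'')) : ℤ)
          - (Module.finrank 𝕜 (Y'' ⧸ LinearMap.range (D'' : X'' →ₗ[𝕜] Y'')) : ℤ))) := by
  obtain ⟨α, β, δ, ε, ζ, hα, hβ, hε, hζ, hα_inj, hαβ, hβδ, hδε, hεζ, hζ_surj⟩ :=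
    exists_snake_exact_sequence (i₁ := (D' : X' →ₗ[𝕜] Y')) (i₂ := (D : X →ₗ[𝕜] Y))
      (i₃ := (D'' : X'' →ₗ[𝕜] Y'')) hip hi hp hjq hj hq
      (congrArg ContinuousLinearMap.toLinearMap hcomm₁).symm
      (congrArg ContinuousLinearMap.toLinearMap hcomm₂).symm
  have euler := Module.sum_neg_one_pow_finrank_eq_zero_of_exact_six α β δ ε ζ
    hα_inj hαβ hβδ hδε hεζ hζ_surj
  exact ⟨⟨α, β, δ, ε, ζ, hα, hβ, hε, hζ, hα_inj, hαβ, hβδ, hδε, hεζ, hζ_surj⟩, by linarith⟩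

/-- Given a short exact sequence of Fredholm operators between Banach spaces,
i.e. a commuting diagram with exact rows `0 → X' → X → X'' → 0`, `0 → Y' → Y → Y'' → 0`
and Fredholm operators `D' : X' → Y'`, `D : X → Y`, `D'' : X'' → Y''`, there is an exact
sequence `0 → ker D' → ker D → ker D'' → coker D' → coker D → coker D'' → 0` (with the
first two maps induced by `i`, `p`, the last two induced by `j`, `q`, and a connecting
map `δ`); in particular `ind D = ind D' + ind D''`. -/
theorem fredholm_snake_exact_sequence
    {𝕜 : Type} [NontriviallyNormedField 𝕜]
    {X' X X'' Y' Y Y'' : Type}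
    [NormedAddCommGroup X'] [NormedSpace 𝕜 X'] [CompleteSpace X']
    [NormedAddCommGroup X] [NormedSpace 𝕜 X] [CompleteSpace X]
    [NormedAddCommGroup X''] [NormedSpace 𝕜 X''] [CompleteSpace X'']
    [NormedAddCommGroup Y'] [NormedSpace 𝕜 Y'] [CompleteSpace Y']
    [NormedAddCommGroup Y] [NormedSpace 𝕜 Y] [CompleteSpace Y]
    [NormedAddCommGroup Y''] [NormedSpace 𝕜 Y''] [CompleteSpace Y'']
    (i : X' →L[𝕜] X) (p : X →L[𝕜] X'') (j : Y' →L[𝕜] Y) (q : Y →L[𝕜] Y'')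
    (D' : X' →L[𝕜] Y') (D : X →L[𝕜] Y) (D'' : X'' →L[𝕜] Y'')
    (hi : Function.Injective i) (hip : Function.Exact i p) (hp : Function.Surjective p)
    (hj : Function.Injective j) (hjq : Function.Exact j q) (hq : Function.Surjective q)
    (hcomm₁ : D.comp i = j.comp D') (hcomm₂ : D''.comp p = q.comp D)
    [FiniteDimensional 𝕜 (LinearMap.ker (D' : X' →ₗ[𝕜] Y'))] [FiniteDimensional 𝕜 (LinearMap.ker (D : X →ₗ[𝕜] Y))]
    [FiniteDimensional 𝕜 (LinearMap.ker (D'' : X'' →ₗ[𝕜] Y''))]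
    [FiniteDimensional 𝕜 (Y' ⧸ LinearMap.range (D' : X' →ₗ[𝕜] Y'))]
    [FiniteDimensional 𝕜 (Y ⧸ LinearMap.range (D : X →ₗ[𝕜] Y))]
    [FiniteDimensional 𝕜 (Y'' ⧸ LinearMap.range (D'' : X'' →ₗ[𝕜] Y''))] :
    (∃ (α : LinearMap.ker (D' : X' →ₗ[𝕜] Y') →ₗ[𝕜] LinearMap.ker (D : X →ₗ[𝕜] Y))
        (β : LinearMap.ker (D : X →ₗ[𝕜] Y) →ₗ[𝕜] LinearMap.ker (D'' : X'' →ₗ[𝕜] Y''))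
        (δ : LinearMap.ker (D'' : X'' →ₗ[𝕜] Y'') →ₗ[𝕜] Y' ⧸ LinearMap.range (D' : X' →ₗ[𝕜] Y'))
        (ε : (Y' ⧸ LinearMap.range (D' : X' →ₗ[𝕜] Y')) →ₗ[𝕜] Y ⧸ LinearMap.range (D : X →ₗ[𝕜] Y))
        (ζ : (Y ⧸ LinearMap.range (D : X →ₗ[𝕜] Y)) →ₗ[𝕜] Y'' ⧸ LinearMap.range (D'' : X'' →ₗ[𝕜] Y'')),
      (∀ x : LinearMap.ker (D' : X' →ₗ[𝕜] Y'), (α x : X) = i (x : X')) ∧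
      (∀ x : LinearMap.ker (D : X →ₗ[𝕜] Y), (β x : X'') = p (x : X)) ∧
      (∀ y : Y', ε (Submodule.Quotient.mk y) = Submodule.Quotient.mk (j y)) ∧
      (∀ y : Y, ζ (Submodule.Quotient.mk y) = Submodule.Quotient.mk (q y)) ∧
      Function.Injective α ∧ Function.Exact α β ∧ Function.Exact β δ ∧
      Function.Exact δ ε ∧ Function.Exact ε ζ ∧ Function.Surjective ζ) ∧
    ((Module.finrank 𝕜 (LinearMap.ker (D : X →ₗ[𝕜] Y)) : ℤ)
        - (Module.finrank 𝕜 (Y ⧸ LinearMap.range (D : X →ₗ[𝕜] Y)) : ℤ)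
      = ((Module.finrank 𝕜 (LinearMap.ker (D' : X' →ₗ[𝕜] Y')) : ℤ)
          - (Module.finrank 𝕜 (Y' ⧸ LinearMap.range (D' : X' →ₗ[𝕜] Y')) : ℤ))
        + ((Module.finrank 𝕜 (LinearMap.ker (D'' : X'' →ₗ[𝕜] Y'')) : ℤ)
          - (Module.finrank 𝕜 (Y'' ⧸ LinearMap.range (D'' : X'' →ₗ[𝕜] Y'')) : ℤ))) :=
  fredholm_snake_exact_sequence_general i p j q D' D D'' hi hip hp hj hjq hq hcomm₁ hcomm₂
end

section
/- Let G be a homeomorphism of a topological space Σ commuting with an involution σ, and suppose G permutes the connected components C₁,…,C_m of Σ^σ. Then the connected components of the fixed locus M_G^{σ_G} of the induced involution on the mapping torus M_G are in natural bijection with the cycles of the permutation induced by G on {C₁,…,C_m}. -/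
variable {S : Type} [TopologicalSpace S]

/-- The gluing relation for the mapping torus of `G : Σ → Σ`: `(1, z) ∼ (0, G z)`. -/
def MTRel (G : S → S) : (unitInterval × S) → (unitInterval × S) → Prop := fun p q =>
  p.1 = 1 ∧ q.1 = 0 ∧ q.2 = G p.2

/-- The mapping torus `M_G = ([0,1] × Σ)/((1,z) ∼ (0, G z))`, with the quotient topology. -/
abbrev MappingTorus (G : S → S) : Type := Quot (MTRel G)

/-- The involution `σ_G [s, z] = [s, σ z]` of the mapping torus, well defined whenever `σ`
commutes with `G`. -/
def mtInvol (G σ : S → S) (h : ∀ z, G (σ z) = σ (G z)) :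
    MappingTorus G → MappingTorus G :=
  Quot.map (fun p => (p.1, σ p.2)) (by
    rintro p q ⟨h1, h2, h3⟩
    exact ⟨h1, h2, by show σ q.2 = G (σ p.2); rw [h3]; exact (h p.2).symm⟩)

/-- The fixed locus `Σ^σ`. -/
abbrev FixLocus (σ : S → S) : Type := {z : S // σ z = z}

/-- The restriction of `G` to the fixed locus `Σ^σ` (using that `G` commutes with `σ`). -/
def fixRestrict (G σ : S → S) (h : ∀ z, G (σ z) = σ (G z)) :
    FixLocus σ → FixLocus σ := fun z =>
  ⟨G z.1, ((h z.1).symm.trans (congrArg G z.2) : σ (G z.1) = G z.1)⟩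

/-- The natural embedding of the mapping torus of `G|_{Σ^σ}` into `M_G`. -/
def mtEmbed (G σ : S → S) (h : ∀ z, G (σ z) = σ (G z)) :
    MappingTorus (fixRestrict G σ h) → MappingTorus G :=
  Quot.map (fun p => (p.1, p.2.1)) (by
    rintro p q ⟨h1, h2, h3⟩
    exact ⟨h1, h2, by show (q.2 : S) = G (p.2 : S); rw [h3]; rfl⟩)

/-!
Each segment `s ↦ [s, z]` is connected and `[1, z] = [0, F z]`, so the component of `[0, z]`
depends only on the `F`-orbit of the component of `z`, and every component of `M_F` arises this
way. Conversely, when the components of `X` are open (e.g. finitely many), sending `[s, z]` to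
the orbit of the component of `z` is a continuous map to a discrete space, hence factors through
the components of `M_F`, and gives a left inverse.
-/

instance Quot.discreteTopology {X : Type*} [TopologicalSpace X] [DiscreteTopology X]
    {r : X → X → Prop} : DiscreteTopology (Quot r) :=
  discreteTopology_iff_forall_isOpen.2 fun _ => isQuotientMap_quot_mk.isOpen_preimage.1
    (isOpen_discrete _)

namespace MappingTorus

variable {X : Type} [TopologicalSpace X] (F : X → X)

lemma continuous_mk_zero : Continuous fun z : X => Quot.mk (MTRel F) ((0 : unitInterval), z) :=
  continuous_quot_mk.comp (Continuous.prodMk_right 0)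

lemma connectedComponentsMk_eq_mk_zero (s : unitInterval) (z : X) :
    ConnectedComponents.mk (Quot.mk (MTRel F) (s, z))
      = ConnectedComponents.mk (Quot.mk (MTRel F) ((0 : unitInterval), z)) := by
  have hseg : Continuous fun t : unitInterval => Quot.mk (MTRel F) (t, z) :=
    continuous_quot_mk.comp (Continuous.prodMk_left z)
  rw [ConnectedComponents.coe_eq_coe']
  exact (isPreconnected_range hseg).subset_connectedComponent ⟨0, rfl⟩ ⟨s, rfl⟩

lemma connectedComponentsMk_zero_apply (z : X) :
    ConnectedComponents.mk (Quot.mk (MTRel F) ((0 : unitInterval), F z))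
      = ConnectedComponents.mk (Quot.mk (MTRel F) ((0 : unitInterval), z)) := by
  rw [← connectedComponentsMk_eq_mk_zero F 1 z]
  exact congrArg _ (Quot.sound ⟨rfl, rfl, rfl⟩).symm

variable {F} {p : ConnectedComponents X → ConnectedComponents X}
  (hp : ∀ z, p (ConnectedComponents.mk z) = ConnectedComponents.mk (F z))
include hp

def orbitsToComponents : Quot (fun a b => p a = b) → ConnectedComponents (MappingTorus F) :=
  Quot.lift (continuous_mk_zero F).connectedComponentsMap <| by
    rintro a _ rfl
    obtain ⟨z, rfl⟩ := ConnectedComponents.surjective_coe a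
    simp only [hp, Continuous.connectedComponentsMap_mk, connectedComponentsMk_zero_apply]

lemma orbitsToComponents_mk (z : X) :
    orbitsToComponents hp (Quot.mk _ (ConnectedComponents.mk z))
      = ConnectedComponents.mk (Quot.mk (MTRel F) ((0 : unitInterval), z)) :=
  (continuous_mk_zero F).connectedComponentsMap_mk z

lemma orbitsToComponents_surjective : Function.Surjective (orbitsToComponents hp) := by
  intro c
  obtain ⟨⟨⟨s, z⟩⟩, rfl⟩ := ConnectedComponents.surjective_coe c
  exact ⟨_, (orbitsToComponents_mk hp z).trans (connectedComponentsMk_eq_mk_zero F s z).symm⟩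

def toOrbit : MappingTorus F → Quot (fun a b => p a = b) :=
  Quot.lift (fun q => Quot.mk _ (ConnectedComponents.mk q.2)) <| by
    rintro q _ ⟨-, -, h⟩
    exact h ▸ Quot.sound (hp q.2)

lemma continuous_toOrbit : Continuous (toOrbit hp) :=
  continuous_quot_lift _ <| continuous_quot_mk.comp <|
    ConnectedComponents.continuous_coe.comp continuous_snd

variable [DiscreteTopology (ConnectedComponents X)]

def componentsToOrbits : ConnectedComponents (MappingTorus F) → Quot (fun a b => p a = b) :=
  (continuous_toOrbit hp).connectedComponentsLift

lemma leftInverse_componentsToOrbits :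
    Function.LeftInverse (componentsToOrbits hp) (orbitsToComponents hp) := by
  rintro ⟨c⟩
  obtain ⟨z, rfl⟩ := ConnectedComponents.surjective_coe c
  rw [orbitsToComponents_mk]
  exact Continuous.connectedComponentsLift_apply_coe _ _

end MappingTorus

theorem mappingTorus_components_biject_cycles_general (G : S ≃ₜ S) (σ : S → S)
    (hcomm : ∀ z, (G : S → S) (σ z) = σ (G z))
    (hfin : Finite (ConnectedComponents (FixLocus σ)))
    (p : ConnectedComponents (FixLocus σ) → ConnectedComponents (FixLocus σ))
    (hp : ∀ z : FixLocus σ,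
      p (ConnectedComponents.mk z) = ConnectedComponents.mk (fixRestrict (⇑G) σ hcomm z)) :
    ∃ θ : Quot (fun a b => p a = b) →
        ConnectedComponents (MappingTorus (fixRestrict (⇑G) σ hcomm)),
      (∀ z : FixLocus σ,
        θ (Quot.mk _ (ConnectedComponents.mk z))
          = ConnectedComponents.mk
              (Quot.mk (MTRel (fixRestrict (⇑G) σ hcomm)) ((0 : unitInterval), z))) ∧
      Function.Bijective θ := by
  have : DiscreteTopology (ConnectedComponents (FixLocus σ)) := Finite.instDiscreteTopology
  exact ⟨MappingTorus.orbitsToComponents hp, MappingTorus.orbitsToComponents_mk hp,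
    (MappingTorus.leftInverse_componentsToOrbits hp).injective,
    MappingTorus.orbitsToComponents_surjective hp⟩

/-- Let `G` be a homeomorphism of `Σ` commuting with an involution `σ`, whose
fixed locus `Σ^σ` has finitely many connected components, permuted by `G`.  The connected
components of the fixed locus `M_G^{σ_G}` of the induced involution on the mapping torus —
which is the mapping torus of `G|_{Σ^σ}` (Statement 15) — are in natural bijection with the
cycles (orbits) of the permutation induced by `G` on the set of connected components of
`Σ^σ`: the natural map sending the orbit of the component of `z` to the component of
`[0, z]` is well defined and bijective. -/
theorem mappingTorus_components_biject_cycles (G : S ≃ₜ S) (σ : S → S)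
    (hσc : Continuous σ) (hσ : Function.Involutive σ)
    (hcomm : ∀ z, (G : S → S) (σ z) = σ (G z))
    (hfin : Finite (ConnectedComponents (FixLocus σ)))
    (p : ConnectedComponents (FixLocus σ) → ConnectedComponents (FixLocus σ))
    (hp : ∀ z : FixLocus σ,
      p (ConnectedComponents.mk z) = ConnectedComponents.mk (fixRestrict (⇑G) σ hcomm z)) :
    ∃ θ : Quot (fun a b => p a = b) →
        ConnectedComponents (MappingTorus (fixRestrict (⇑G) σ hcomm)),
      (∀ z : FixLocus σ,
        θ (Quot.mk _ (ConnectedComponents.mk z))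
          = ConnectedComponents.mk
              (Quot.mk (MTRel (fixRestrict (⇑G) σ hcomm)) ((0 : unitInterval), z))) ∧
      Function.Bijective θ :=
  mappingTorus_components_biject_cycles_general G σ hcomm hfin p hp
end
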